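/- arXiv:2407.21755 — 7 statements merged into one kernel-verified Lean document; each statement's English description precedes it below -/
import Mathlib

section
/- Let n and k be positive integers with k not dividing n, and write n = mk + j with 1 ≤ j ≤ k - 1. Then the signed excedance enumerator over mod-k-alternating permutations satisfies ∑_{π ∈ MP_{n,1}^k} sgn(π) · t^{exc(π)} = (1 - t)^{n-k} as polynomials in ℚ[t]. -/
open Polynomial Finset

/-- Number of excedances of a permutation of `Fin n` (indices where `π i > i`). -/
def exc {n : ℕ} (π : Equiv.Perm (Fin n)) : ℕ :=
  (Finset.univ.filter fun i => π i > i).card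

/-- Mod-k-alternating permutations of size `n` starting with remainder `r` (mod k):
permutations with `π i - i ≡ r - 1 (mod k)` for all `i`. -/
def MP (n k r : ℕ) : Finset (Equiv.Perm (Fin n)) :=
  Finset.univ.filter fun π => ∀ i : Fin n, ((π i : ℤ) - (i : ℤ)) ≡ ((r : ℤ) - 1) [ZMOD (k : ℤ)]

/-!
Restricting the matrix with `x` strictly below the diagonal and `1` elsewhere to the pairs of
indices that are congruent mod `k` makes its determinant the signed excedance enumerator of
`MP n k 1`. While `k < n`, subtracting row `k` from row `0` leaves `1 - x` alone in that row, and
the complementary minor is the same matrix of size `n - 1`; once `n ≤ k` it is the identity.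
-/

section

variable {R : Type*} [CommRing R] (k : ℕ) (x : R)

def excMatrix (n : ℕ) : Matrix (Fin n) (Fin n) R :=
  Matrix.of fun i j => if (j : ℕ) ≡ i [MOD k] then (if j < i then x else 1) else 0

lemma mem_MP_one_iff {n : ℕ} (π : Equiv.Perm (Fin n)) :
    π ∈ MP n k 1 ↔ ∀ i : Fin n, (i : ℕ) ≡ π i [MOD k] := by
  simp only [MP, mem_filter, mem_univ, true_and, Nat.cast_one, sub_self,
    Int.modEq_zero_iff_dvd, Nat.modEq_iff_dvd]

lemma prod_excMatrix_apply {n : ℕ} (π : Equiv.Perm (Fin n)) :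
    ∏ i, excMatrix k x n (π i) i = if π ∈ MP n k 1 then x ^ exc π else 0 := by
  split_ifs with hπ
  · rw [mem_MP_one_iff] at hπ
    simp only [excMatrix, Matrix.of_apply, hπ, if_true, prod_ite, prod_const_one, mul_one,
      prod_const, exc]
  · obtain ⟨i, hi⟩ := not_forall.1 ((mem_MP_one_iff k π).not.1 hπ)
    exact prod_eq_zero (mem_univ i) (if_neg hi)

lemma det_excMatrix_eq_sum (n : ℕ) :
    (excMatrix k x n).det = ∑ π ∈ MP n k 1, ((Equiv.Perm.sign π : ℤ) : R) * x ^ exc π := by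
  simp only [Matrix.det_apply, prod_excMatrix_apply, Units.smul_def, zsmul_eq_mul, mul_ite,
    mul_zero, sum_ite_mem, univ_inter]

lemma excMatrix_of_le {n : ℕ} (h : n ≤ k) : excMatrix k x n = 1 := by
  ext i j
  have hij : (j : ℕ) ≡ i [MOD k] ↔ j = i := by
    rw [Nat.ModEq, Nat.mod_eq_of_lt (by omega), Nat.mod_eq_of_lt (by omega), Fin.val_inj]
  simp only [excMatrix, Matrix.of_apply, Matrix.one_apply, hij, eq_comm (a := j)]
  split_ifs <;> simp_all

lemma det_excMatrix_succ {n : ℕ} (hk : 0 < k) (h : k ≤ n) :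
    (excMatrix k x (n + 1)).det = (1 - x) * (excMatrix k x n).det := by
  set M := excMatrix k x (n + 1)
  let r : Fin (n + 1) := ⟨k, by omega⟩
  have h0r : (0 : Fin (n + 1)) ≠ r := Fin.ne_of_val_ne hk.ne
  have hrow : M 0 + (-1 : R) • M r = Pi.single 0 (1 - x) := by
    ext j
    have hmod : (j : ℕ) ≡ k [MOD k] ↔ (j : ℕ) ≡ 0 [MOD k] := by
      simp [Nat.ModEq, Nat.mod_self]
    simp only [M, excMatrix, Matrix.of_apply, Pi.add_apply, Pi.smul_apply, Pi.single_apply,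
      r, Fin.lt_def, Fin.val_zero, hmod, Nat.not_lt_zero, if_false]
    by_cases hj : (j : ℕ) ≡ 0 [MOD k]
    · have hlt : (j : ℕ) < k ↔ j = 0 :=
        ⟨fun hjk => Fin.ext (Nat.eq_zero_of_dvd_of_lt (Nat.modEq_zero_iff_dvd.1 hj) hjk),
          fun hj0 => by simpa [hj0] using hk⟩
      simp only [hj, hlt, if_true]
      split_ifs <;> simp [sub_eq_add_neg]
    · have hj0 : j ≠ 0 := by rintro rfl; exact hj rfl
      simp [hj, hj0]
  have hminor : (M.updateRow 0 (Pi.single 0 (1 - x))).submatrix Fin.succ Fin.succ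
      = excMatrix k x n := by
    ext i j
    have hsucc : (j : ℕ) + 1 ≡ i + 1 [MOD k] ↔ (j : ℕ) ≡ i [MOD k] :=
      ⟨Nat.ModEq.add_right_cancel' 1, (Nat.ModEq.add_right 1 ·)⟩
    simp [M, excMatrix, Matrix.updateRow_ne, Fin.succ_ne_zero, hsucc]
  rw [← Matrix.det_updateRow_add_smul_self M h0r (-1), hrow, Matrix.det_succ_row_zero,
    Fin.sum_univ_succ]
  simp [hminor]

lemma det_excMatrix (hk : 0 < k) (n : ℕ) : (excMatrix k x n).det = (1 - x) ^ (n - k) := by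
  induction n with
  | zero => rw [Matrix.det_fin_zero, Nat.zero_sub, pow_zero]
  | succ n ih =>
    rcases le_or_gt k n with h | h
    · rw [det_excMatrix_succ k x hk h, ih, ← pow_succ', Nat.sub_add_comm h]
    · rw [excMatrix_of_le k x h, Matrix.det_one, Nat.sub_eq_zero_of_le h, pow_zero]

end

theorem stmt0_general (n k : ℕ) (hk : 0 < k) :
    ∑ π ∈ MP n k 1, ((Equiv.Perm.sign π : ℤ) : ℚ[X]) * X ^ exc π = (1 - X) ^ (n - k) := by
  rw [← det_excMatrix_eq_sum, det_excMatrix k X hk]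

theorem stmt0 (n k m j : ℕ) (hn : 0 < n) (hk : 0 < k) (hnd : ¬ k ∣ n)
    (hj1 : 1 ≤ j) (hj2 : j ≤ k - 1) (hmj : n = m * k + j) :
    ∑ π ∈ MP n k 1, ((Equiv.Perm.sign π : ℤ) : ℚ[X]) * X ^ exc π = (1 - X) ^ (n - k) :=
  stmt0_general n k hk
end

section
/- Let k and m be positive integers, let n = mk, and let r be an integer with 2 ≤ r ≤ k. Then ∑_{π ∈ MP_{n,r}^k} sgn(π) · t^{exc(π)} = (-1)^{(mr-1)(k-r+1)} · t^{k-r+1} · (1 - t)^{n-k} as polynomials in ℚ[t]. -/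
open Polynomial Finset

/-!
Write `i ∈ Fin (m * k)` as `i = c + k * j` with residue `c : Fin k`. A permutation in
`MP (m * k) k (s + 1)` sends residue `c` to `c + s`, so it is the rotation `ρ = finCycle s` of the
residues together with an arbitrary permutation `σ c` of `Fin m` on each residue class. Its sign is
`sign ρ ^ m * ∏ c, sign (σ c)`, and since the order on `Fin (m * k)` is lexicographic in `(j, c)`,
`c + k * j` is an excedance iff `j < σ c j`, or `j = σ c j` and `c < ρ c`. The signed sum thus
factors over the residues into signed generating functions of excedances, `(1 - t) ^ (m - 1)`, and,
for the `k - s` residues with `c < ρ c`, of weak excedances, `t * (t - 1) ^ (m - 1)`. Both are the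
determinant of a matrix that is constant below and on/above the diagonal, computed by an LU
factorisation.
-/

open Matrix in
theorem det_ite_lt {R : Type*} [CommRing R] (n : ℕ) (x y : R) :
    det (of fun a b : Fin (n + 1) => if b < a then x else y) = y * (y - x) ^ n := by
  have zero_ne_succ {i : Fin n} : (0 : Fin (n + 1)) ≠ i.succ := (Fin.succ_ne_zero i).symm
  let L : Matrix (Fin (n + 1)) (Fin (n + 1)) R :=
    of fun a b => if b = 0 then (if a = 0 then y else x) else if a = b then 1 else 0
  let U : Matrix (Fin (n + 1)) (Fin (n + 1)) R :=
    of fun a b => if a = 0 then 1 else if a ≤ b then y - x else 0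
  have hLU : L * U = of fun a b : Fin (n + 1) => if b < a then x else y := by
    ext a b
    rw [mul_apply, Fin.sum_univ_succ]
    rcases Fin.eq_zero_or_eq_succ a with rfl | ⟨a, rfl⟩
    · simp [L, U, zero_ne_succ]
    · rw [Finset.sum_eq_single a (by simp +contextual [L, U, eq_comm]) (by simp)]
      by_cases h : a.succ ≤ b
      · simp [L, U, h, not_lt.2 h]
      · simp [L, U, h, not_le.1 h]
  have hL : L.det = y := by
    rw [det_of_isLowerTriangular L fun i j (hij : i < j) => by
      simp [L, (hij.trans_le' (Fin.zero_le _)).ne', hij.ne]]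
    simp [L]
  have hU : U.det = (y - x) ^ n := by
    rw [det_of_isUpperTriangular (M := U) fun i j (hij : j < i) => by
      simp [U, (hij.trans_le' (Fin.zero_le _)).ne', not_le.2 hij]]
    simp [Fin.prod_univ_succ, U]
  rw [← hLU, det_mul, hL, hU]

def weakExc {n : ℕ} (π : Equiv.Perm (Fin n)) : ℕ :=
  #{i | i ≤ π i}

section GeneratingFunctions

variable {R : Type*} [CommRing R] (x : R) (m : ℕ)

theorem sum_sign_mul_pow_exc :
    ∑ σ : Equiv.Perm (Fin (m + 1)), ((Equiv.Perm.sign σ : ℤ) : R) * x ^ exc σ = (1 - x) ^ m := by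
  rw [← one_mul ((1 - x) ^ m), ← det_ite_lt, Matrix.det_apply']
  refine Fintype.sum_congr _ _ fun σ => ?_
  simp [exc, Finset.prod_ite]

theorem sum_sign_mul_pow_weakExc :
    ∑ σ : Equiv.Perm (Fin (m + 1)), ((Equiv.Perm.sign σ : ℤ) : R) * x ^ weakExc σ
      = x * (x - 1) ^ m := by
  rw [← det_ite_lt, ← Matrix.det_transpose, Matrix.det_apply']
  refine Fintype.sum_congr _ _ fun σ => ?_
  simp [weakExc, Finset.prod_ite]

end GeneratingFunctions

section FiberPerm

open Equiv

variable {α β : Type*}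

def fiberPerm (ρ : Perm β) (σ : β → Perm α) : Perm (α × β) :=
  (prodCongrLeft σ).trans (prodCongrRight fun _ => ρ)

@[simp]
theorem fiberPerm_apply (ρ : Perm β) (σ : β → Perm α) (p : α × β) :
    fiberPerm ρ σ p = (σ p.2 p.1, ρ p.2) :=
  rfl

theorem fiberPerm_injective (ρ : Perm β) : Function.Injective (fiberPerm (α := α) ρ) := by
  intro σ σ' h
  funext b
  ext a
  simpa using congrArg Prod.fst (DFunLike.congr_fun h (a, b))

theorem exists_fiberPerm_eq [Finite α] {ρ : Perm β} {g : Perm (α × β)}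
    (hg : ∀ p, (g p).2 = ρ p.2) : ∃ σ, fiberPerm ρ σ = g := by
  have hinj (b : β) : Function.Injective fun a => (g (a, b)).1 := fun a a' h =>
    congrArg Prod.fst (g.injective (Prod.ext h ((hg (a, b)).trans (hg (a', b)).symm)))
  refine ⟨fun b => Equiv.ofBijective _ (Finite.injective_iff_bijective.1 (hinj b)), ?_⟩
  ext p <;> simp [hg]

theorem sign_fiberPerm [Fintype α] [DecidableEq α] [Fintype β] [DecidableEq β]
    (ρ : Perm β) (σ : β → Perm α) :
    Perm.sign (fiberPerm ρ σ) = Perm.sign ρ ^ Fintype.card α * ∏ b, Perm.sign (σ b) := by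
  rw [fiberPerm, ← Perm.mul_def, map_mul, Perm.sign_prodCongrRight,
    Perm.sign_prodCongrLeft, Finset.prod_const, Finset.card_univ]

end FiberPerm

section Blocks

open Equiv

variable {m k : ℕ}

theorem finProdFinEquiv_lt_finProdFinEquiv {p q : Fin m × Fin k} :
    finProdFinEquiv p < finProdFinEquiv q ↔ toLex p < toLex q := by
  have hmono : StrictMono fun p : Fin m ×ₗ Fin k => finProdFinEquiv (ofLex p) := by
    intro p q h
    rw [Prod.Lex.lt_iff] at h
    change ((ofLex p).2 : ℕ) + k * (ofLex p).1 < (ofLex q).2 + k * (ofLex q).1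
    generalize ofLex p = a, ofLex q = b at h ⊢
    rcases h with h | ⟨h, h'⟩
    · calc (a.2 : ℕ) + k * a.1 < k * (a.1 + 1) := by rw [mul_add_one]; omega
        _ ≤ k * b.1 := Nat.mul_le_mul_left k h
        _ ≤ b.2 + k * b.1 := Nat.le_add_left _ _
    · rw [h]
      exact Nat.add_lt_add_right h' _
  exact hmono.lt_iff_lt

@[simp]
theorem modNat_finProdFinEquiv (p : Fin m × Fin k) : (finProdFinEquiv p).modNat = p.2 :=
  congrArg Prod.snd (finProdFinEquiv.symm_apply_apply p)

theorem mem_MP_iff (s : Fin k) (π : Perm (Fin (m * k))) :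
    π ∈ MP (m * k) k (s + 1) ↔ ∀ i, (π i).modNat = i.modNat + s := by
  simp only [MP, mem_filter, mem_univ, true_and]
  refine forall_congr' fun i => ?_
  have hshift : (π i : ℤ) - i ≡ ((s + 1 : ℕ) : ℤ) - 1 [ZMOD k] ↔
      ((π i : ℕ) : ℤ) ≡ ((i + s : ℕ) : ℤ) [ZMOD k] := by
    rw [Int.modEq_iff_dvd, Int.modEq_iff_dvd]
    push_cast
    ring_nf
  rw [hshift, Int.natCast_modEq_iff, Fin.ext_iff, Fin.val_add, Fin.coe_modNat, Fin.coe_modNat,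
    Nat.ModEq, Nat.mod_add_mod]

theorem MP_eq_image (s : Fin k) :
    MP (m * k) k (s + 1)
      = univ.image fun σ => finProdFinEquiv.permCongr (fiberPerm (finCycle s) σ) := by
  ext π
  simp only [mem_image, mem_univ, true_and, mem_MP_iff]
  constructor
  · intro h
    obtain ⟨σ, hσ⟩ := exists_fiberPerm_eq (ρ := finCycle s) (g := finProdFinEquiv.symm.permCongr π)
      fun p => by simpa using h (finProdFinEquiv p)
    exact ⟨σ, by rw [hσ, ← Equiv.permCongr_symm, Equiv.apply_symm_apply]⟩
  · rintro ⟨σ, rfl⟩ i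
    simp

theorem exc_permCongr_fiberPerm (ρ : Perm (Fin k)) (σ : Fin k → Perm (Fin m)) :
    exc (finProdFinEquiv.permCongr (fiberPerm ρ σ))
      = ∑ c, if c < ρ c then weakExc (σ c) else exc (σ c) := by
  rw [exc, card_filter, ← finProdFinEquiv.sum_comp, Fintype.sum_prod_type_right]
  refine Fintype.sum_congr _ _ fun c => ?_
  split_ifs with hc
  · rw [weakExc, card_filter]
    refine Fintype.sum_congr _ _ fun j => ?_
    simp [finProdFinEquiv_lt_finProdFinEquiv, Prod.Lex.toLex_lt_toLex, hc, le_iff_lt_or_eq]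
  · rw [exc, card_filter]
    refine Fintype.sum_congr _ _ fun j => ?_
    simp [finProdFinEquiv_lt_finProdFinEquiv, Prod.Lex.toLex_lt_toLex, hc]

end Blocks

theorem sum_sign_mul_pow_exc_fiberPerm {R : Type*} [CommRing R] (x : R) (m : ℕ) {k : ℕ}
    (ρ : Equiv.Perm (Fin k)) :
    ∑ σ : Fin k → Equiv.Perm (Fin (m + 1)),
        ((Equiv.Perm.sign (finProdFinEquiv.permCongr (fiberPerm ρ σ)) : ℤ) : R)
          * x ^ exc (finProdFinEquiv.permCongr (fiberPerm ρ σ))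
      = ((Equiv.Perm.sign ρ : ℤ) : R) ^ (m + 1)
          * ∏ c, if c < ρ c then x * (x - 1) ^ m else (1 - x) ^ m := by
  calc _ = ∑ σ : Fin k → Equiv.Perm (Fin (m + 1)), ((Equiv.Perm.sign ρ : ℤ) : R) ^ (m + 1)
          * ∏ c, ((Equiv.Perm.sign (σ c) : ℤ) : R)
            * x ^ (if c < ρ c then weakExc (σ c) else exc (σ c)) := by
        refine Fintype.sum_congr _ _ fun σ => ?_
        rw [Equiv.Perm.sign_permCongr, sign_fiberPerm, exc_permCongr_fiberPerm,
          prod_mul_distrib, prod_pow_eq_pow_sum, Fintype.card_fin]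
        push_cast
        ring
    _ = ((Equiv.Perm.sign ρ : ℤ) : R) ^ (m + 1) * ∏ c, ∑ τ : Equiv.Perm (Fin (m + 1)),
          ((Equiv.Perm.sign τ : ℤ) : R) * x ^ (if c < ρ c then weakExc τ else exc τ) := by
        rw [← mul_sum, Fintype.prod_sum]
    _ = _ := by
        congr 1
        refine prod_congr rfl fun c _ => ?_
        split_ifs
        · exact sum_sign_mul_pow_weakExc x m
        · exact sum_sign_mul_pow_exc x m

theorem prod_ite_lt_finCycle {M : Type*} [CommMonoid M] {k : ℕ} {s : Fin k} (hs : 0 < (s : ℕ))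
    (a b : M) : ∏ c, (if c < finCycle s c then a else b) = a ^ (k - s) * b ^ (s : ℕ) := by
  have hlt (c : Fin k) : c < finCycle s c ↔ (c : ℕ) < k - s := by
    rw [finCycle_apply, Fin.lt_def, Fin.val_add]
    rcases lt_or_ge ((c : ℕ) + s) k with h | h
    · rw [Nat.mod_eq_of_lt h]
      omega
    · rw [Nat.mod_eq_sub_mod h, Nat.mod_eq_of_lt (by omega)]
      omega
  have hcard : #{c | c < finCycle s c} = k - s := by
    simp_rw [hlt, Fin.card_filter_val_lt]
    omega
  rw [prod_ite, prod_const, prod_const, filter_not, card_sdiff_of_subset (filter_subset _ _),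
    hcard, card_univ, Fintype.card_fin, Nat.sub_sub_self s.isLt.le]

theorem sign_finCycle {k : ℕ} (s : Fin k) :
    Equiv.Perm.sign (finCycle s) = (-1) ^ ((k - 1) * s) := by
  have hpow : finCycle s = finRotate k ^ (s : ℕ) := by
    ext c
    rw [finCycle_eq_finRotate_iterate, Equiv.Perm.coe_pow]
  rw [hpow, map_pow, sign_finRotate, pow_mul]

theorem neg_one_pow_mul_pow_mul_pow {R : Type*} [CommRing R] (x : R) (m : ℕ) {k s : ℕ}
    (hs : s < k) :
    ((-1) ^ ((k - 1) * s)) ^ (m + 1) * ((x * (x - 1) ^ m) ^ (k - s) * ((1 - x) ^ m) ^ s)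
      = (-1) ^ (((m + 1) * (s + 1) - 1) * (k - (s + 1) + 1)) * x ^ (k - (s + 1) + 1)
          * (1 - x) ^ ((m + 1) * k - k) := by
  obtain ⟨u, rfl⟩ : ∃ u, k = s + u + 1 := ⟨k - s - 1, by omega⟩
  have hsub₁ : (m + 1) * (s + 1) - 1 = m * s + m + s := by rw [Nat.sub_eq_of_eq_add]; ring
  have hsub₂ : (m + 1) * (s + u + 1) - (s + u + 1) = m * (s + u + 1) := by
    rw [Nat.sub_eq_of_eq_add]; ring
  have hparity : (-1 : R) ^ ((m * s + m + s) * (u + 1))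
      = (-1) ^ ((s + u) * s * (m + 1) + m * (u + 1)) := by
    refine neg_one_pow_congr ?_
    simp only [Nat.even_add, Nat.even_mul, Nat.even_add_one]
    tauto
  rw [show s + u + 1 - 1 = s + u by omega, show s + u + 1 - s = u + 1 by omega,
    show s + u + 1 - (s + 1) + 1 = u + 1 by omega, hsub₁, hsub₂, hparity,
    show x - 1 = -1 * (1 - x) by ring, mul_pow]
  -- generalizing stops `ring` from merging `(-1) ^ a * (1 - x) ^ a` into `(x - 1) ^ a`
  generalize (-1 : R) = z
  generalize 1 - x = y
  ring

theorem stmt2_general (k m r : ℕ) (hm : 0 < m) (n : ℕ) (hn : n = m * k)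
    (hr1 : 2 ≤ r) (hr2 : r ≤ k) :
    ∑ π ∈ MP n k r, ((Equiv.Perm.sign π : ℤ) : ℚ[X]) * X ^ exc π
      = (-1) ^ ((m * r - 1) * (k - r + 1)) * X ^ (k - r + 1) * (1 - X) ^ (n - k) := by
  subst hn
  obtain ⟨m, rfl⟩ : ∃ m', m = m' + 1 := ⟨m - 1, by omega⟩
  obtain ⟨s, rfl⟩ : ∃ s : Fin k, (s : ℕ) + 1 = r := ⟨⟨r - 1, by omega⟩, by simp; omega⟩
  rw [MP_eq_image, sum_image fun σ _ τ _ h => fiberPerm_injective _ (Equiv.injective _ h),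
    sum_sign_mul_pow_exc_fiberPerm, prod_ite_lt_finCycle (by omega), sign_finCycle]
  push_cast
  exact neg_one_pow_mul_pow_mul_pow X m s.isLt

theorem stmt2 (k m r : ℕ) (hk : 0 < k) (hm : 0 < m) (n : ℕ) (hn : n = m * k)
    (hr1 : 2 ≤ r) (hr2 : r ≤ k) :
    ∑ π ∈ MP n k r, ((Equiv.Perm.sign π : ℤ) : ℚ[X]) * X ^ exc π
      = (-1) ^ ((m * r - 1) * (k - r + 1)) * X ^ (k - r + 1) * (1 - X) ^ (n - k) :=
  stmt2_general k m r hm n hn hr1 hr2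
end

section
/- Let n, k be positive integers and let r be an integer with 2 ≤ r ≤ k. If k does not divide n, then the set MP_{n,r}^k is empty. -/
/-!
If `π(i) ≡ i + c (mod k)` for every `i`, then `π` maps the indices `i < n` of each residue class `a`
bijectively onto those of the class `a + c`, so the number of indices in a class is invariant under
translation by `c`, hence by `g = gcd(c, k)`. When `k ∤ n` the classes `0, …, (n % k) - 1` contain
one index more than the others, and for `0 < g < k` the translation by `g` identifies a class of
the first kind with one of the second: `n % k` with `(n % k) % g` if `g ≤ n % k`, and `g` with `0`
otherwise. Here `c = r - 1` and `0 < c < k`.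
-/

open Polynomial Finset

open Function

def residueCount (n k : ℕ) (a : ZMod k) : ℕ := #{i : Fin n | ((i : ℕ) : ZMod k) = a}

lemma residueCount_natCast (n : ℕ) {k j : ℕ} (hk : 0 < k) (hj : j < k) :
    residueCount n k j = n / k + if j < n % k then 1 else 0 := by
  rw [← Nat.mod_eq_of_lt hj, ← Nat.count_modEq_card n hk, Nat.count_eq_card_filter_range,
    residueCount, card_filter, card_filter, sum_range]
  simp only [ZMod.natCast_eq_natCast_iff, Nat.mod_eq_of_lt hj]

lemma periodic_residueCount {n k : ℕ} {c : ZMod k} (π : Equiv.Perm (Fin n))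
    (hπ : ∀ i, ((π i : ℕ) : ZMod k) = i + c) : Periodic (residueCount n k) c := fun _ =>
  (card_equiv π fun i => by simp [hπ]).symm

lemma periodic_residueCount_of_mem_MP {n k r : ℕ} {π : Equiv.Perm (Fin n)} (hr : 1 ≤ r)
    (hπ : π ∈ MP n k r) : Periodic (residueCount n k) ((r - 1 : ℕ) : ZMod k) := by
  refine periodic_residueCount π fun i => ?_
  have hi := (ZMod.intCast_eq_intCast_iff _ _ k).mpr ((mem_filter.mp hπ).2 i)
  push_cast [Nat.cast_sub hr] at hi ⊢
  linear_combination hi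

lemma ZMod.periodic_natCast_gcd {α : Type*} {k c : ℕ} {f : ZMod k → α}
    (h : Periodic f (c : ZMod k)) : Periodic f (c.gcd k : ZMod k) := by
  have hgcd : ((c.gcd k : ℕ) : ZMod k) = (c.gcdA k : ZMod k) * c := by
    have := congrArg (Int.cast : ℤ → ZMod k) (Nat.gcd_eq_gcd_ab c k)
    push_cast at this
    rw [this, ZMod.natCast_self]
    ring
  rw [hgcd]
  exact h.int_mul _

lemma Function.Periodic.natCast_mod {α : Type*} {k g : ℕ} {f : ZMod k → α}
    (h : Periodic f (g : ZMod k)) (j : ℕ) : f (j % g : ℕ) = f j := by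
  conv_rhs => rw [← Nat.mod_add_div' j g]
  push_cast
  exact (h.nat_mul _ _).symm

lemma not_periodic_residueCount {n k g : ℕ} (hnd : ¬ k ∣ n) (hg : 0 < g) (hgk : g < k) :
    ¬ Periodic (residueCount n k) (g : ZMod k) := by
  intro h
  have hk : 0 < k := hg.trans hgk
  have hs : 0 < n % k := Nat.pos_of_ne_zero fun h0 => hnd (Nat.dvd_of_mod_eq_zero h0)
  have hsk : n % k < k := Nat.mod_lt n hk
  rcases le_or_gt g (n % k) with hgs | hsg
  · have hcount := h.natCast_mod (n % k)
    have hmod : n % k % g < g := Nat.mod_lt _ hg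
    rw [residueCount_natCast n hk hsk, residueCount_natCast n hk (by omega)] at hcount
    simp only [lt_irrefl, if_false, show n % k % g < n % k by omega, if_true] at hcount
    omega
  · have hcount := h.natCast_mod g
    rw [Nat.mod_self, residueCount_natCast n hk hgk, residueCount_natCast n hk hk] at hcount
    simp only [hs, if_true, show ¬ g < n % k by omega, if_false] at hcount
    omega

theorem stmt12_general (n k r : ℕ) (hr1 : 2 ≤ r) (hr2 : r ≤ k)
    (hnd : ¬ k ∣ n) : MP n k r = ∅ := by
  refine eq_empty_of_forall_notMem fun π hπ => ?_
  have hc : Periodic (residueCount n k) ((r - 1 : ℕ) : ZMod k) :=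
    periodic_residueCount_of_mem_MP (by omega) hπ
  have hg0 : 0 < (r - 1).gcd k := Nat.gcd_pos_of_pos_left _ (by omega)
  have hgk : (r - 1).gcd k < k := (Nat.gcd_le_left _ (by omega)).trans_lt (by omega)
  exact not_periodic_residueCount hnd hg0 hgk (ZMod.periodic_natCast_gcd hc)

theorem stmt12 (n k r : ℕ) (hn : 0 < n) (hk : 0 < k) (hr1 : 2 ≤ r) (hr2 : r ≤ k)
    (hnd : ¬ k ∣ n) : MP n k r = ∅ :=
  stmt12_general n k r hr1 hr2 hnd
end

section
/- Let f, g ∈ ℚ[t] and let a be a rational number such that both f + g and f - g are gamma-positive with center of symmetry a. Then for every positive integer r, the polynomials f^r + g^r and f^r - g^r are gamma-positive with center of symmetry r·a. -/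
open Polynomial Finset

/-!
Writing `k = r + i` and `s = N + r = 2c`, the terms of a gamma expansion are `t^k (1+t)^(s-2k)`
for `k ≤ s/2`: they depend on the center only, and `t^i (1+t)^(s-2i) * t^j (1+t)^(s'-2j)` is the
term for `s + s'` and `i + j`. So for a fixed center the gamma-positive polynomials form a convex
cone, and centers add under multiplication. With `u = f + g` and `v = f - g`,
`(2f)^r ± (2g)^r = ∑ₖ (1 ± (-1)^(r-k)) (r choose k) u^k v^(r-k)` has nonnegative coefficients,
and each `u^k v^(r-k)` is gamma-positive with center `r a`.
-/

/-- A polynomial `f ∈ ℚ[t]` is gamma-positive with center of symmetry `c` if there are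
nonnegative integers `r ≤ N` with `N + r = 2c` and nonnegative rationals `γ i` with
`f = ∑_{i=0}^{⌊(N-r)/2⌋} γ i * t^(r+i) * (1+t)^(N-r-2i)`. -/
def GammaPositive (f : ℚ[X]) (c : ℚ) : Prop :=
  ∃ N r : ℕ, r ≤ N ∧ (N : ℚ) + (r : ℚ) = 2 * c ∧
    ∃ γ : ℕ → ℚ, (∀ i, 0 ≤ γ i) ∧
      f = ∑ i ∈ Finset.range ((N - r) / 2 + 1), C (γ i) * X ^ (r + i) * (1 + X) ^ (N - r - 2 * i)

lemma add_pow_add_mul_sub_pow {R : Type*} [CommRing R] (u v ε : R) (n : ℕ) :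
    (u + v) ^ n + ε * (u - v) ^ n =
      ∑ k ∈ range (n + 1), (1 + ε * (-1) ^ (n - k)) * n.choose k * (u ^ k * v ^ (n - k)) := by
  rw [sub_eq_add_neg, add_pow, add_pow, mul_sum, ← sum_add_distrib]
  refine sum_congr rfl fun k _ => ?_
  rw [neg_pow]
  ring

noncomputable def gammaTerm (s k : ℕ) : ℚ[X] := X ^ k * (1 + X) ^ (s - 2 * k)

def HasGammaExpansion (s : ℕ) (f : ℚ[X]) : Prop :=
  ∃ γ : ℕ → ℚ, (∀ k, 0 ≤ γ k) ∧
    f = ∑ k ∈ range (s / 2 + 1), C (γ k) * gammaTerm s k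

lemma gammaTerm_mul {s t i j : ℕ} (hi : 2 * i ≤ s) (hj : 2 * j ≤ t) :
    gammaTerm s i * gammaTerm t j = gammaTerm (s + t) (i + j) := by
  rw [gammaTerm, gammaTerm, gammaTerm,
    show s + t - 2 * (i + j) = (s - 2 * i) + (t - 2 * j) by omega, pow_add, pow_add]
  ring

lemma gammaPositive_iff {f : ℚ[X]} {c : ℚ} :
    GammaPositive f c ↔ ∃ s : ℕ, (s : ℚ) = 2 * c ∧ HasGammaExpansion s f := by
  constructor
  · rintro ⟨N, r, hrN, hc, γ, hγ, rfl⟩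
    refine ⟨N + r, by push_cast; exact hc, fun k => if r ≤ k then γ (k - r) else 0,
      fun k => ite_nonneg (hγ _) le_rfl, ?_⟩
    rw [show (N + r) / 2 + 1 = r + ((N - r) / 2 + 1) by omega, sum_range_add _ r,
      sum_eq_zero (s := range r) fun k hk => by simp [(mem_range.1 hk).not_ge], zero_add]
    refine sum_congr rfl fun i _ => ?_
    simp only [le_add_iff_nonneg_right, zero_le, if_true, Nat.add_sub_cancel_left, gammaTerm,
      mul_assoc, show N + r - 2 * (r + i) = N - r - 2 * i by omega]
  · rintro ⟨s, hs, γ, hγ, rfl⟩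
    exact ⟨s, 0, Nat.zero_le s, by simpa using hs, γ, hγ, by simp [gammaTerm, mul_assoc]⟩

namespace HasGammaExpansion

variable {s t : ℕ} {f g : ℚ[X]}

lemma zero : HasGammaExpansion s 0 :=
  ⟨0, fun _ => le_rfl, by simp⟩

lemma one : HasGammaExpansion 0 1 :=
  ⟨1, fun _ => zero_le_one, by simp [gammaTerm]⟩

lemma add (hf : HasGammaExpansion s f) (hg : HasGammaExpansion s g) :
    HasGammaExpansion s (f + g) := by
  obtain ⟨γ, hγ, rfl⟩ := hf
  obtain ⟨δ, hδ, rfl⟩ := hg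
  refine ⟨γ + δ, fun k => add_nonneg (hγ k) (hδ k), ?_⟩
  simp only [Pi.add_apply, C_add, add_mul, sum_add_distrib]

lemma C_mul {q : ℚ} (hq : 0 ≤ q) (hf : HasGammaExpansion s f) :
    HasGammaExpansion s (C q * f) := by
  obtain ⟨γ, hγ, rfl⟩ := hf
  refine ⟨fun k => q * γ k, fun k => mul_nonneg hq (hγ k), ?_⟩
  simp only [mul_sum, Polynomial.C_mul, mul_assoc]

lemma sum {ι : Type*} (I : Finset ι) {F : ι → ℚ[X]}
    (hF : ∀ i ∈ I, HasGammaExpansion s (F i)) :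
    HasGammaExpansion s (∑ i ∈ I, F i) :=
  sum_induction F _ (fun _ _ => add) zero hF

lemma mul (hf : HasGammaExpansion s f) (hg : HasGammaExpansion t g) :
    HasGammaExpansion (s + t) (f * g) := by
  obtain ⟨γ, hγ, rfl⟩ := hf
  obtain ⟨δ, hδ, rfl⟩ := hg
  set P := range (s / 2 + 1) ×ˢ range (t / 2 + 1)
  have hP : ∀ p ∈ P, p.1 + p.2 ∈ range ((s + t) / 2 + 1) := by
    intro p hp
    rw [mem_product, mem_range, mem_range] at hp
    rw [mem_range]; omega
  refine ⟨fun k => ∑ p ∈ P with p.1 + p.2 = k, γ p.1 * δ p.2,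
    fun k => sum_nonneg fun p _ => mul_nonneg (hγ _) (hδ _), ?_⟩
  rw [sum_mul_sum, ← sum_product', ← sum_fiberwise_of_maps_to hP]
  refine sum_congr rfl fun k _ => ?_
  rw [map_sum, sum_mul]
  refine sum_congr rfl fun p hp => ?_
  obtain ⟨hpP, rfl⟩ := mem_filter.1 hp
  rw [mem_product, mem_range, mem_range] at hpP
  rw [Polynomial.C_mul, ← gammaTerm_mul (by omega) (by omega)]
  ring

lemma pow (hf : HasGammaExpansion s f) (n : ℕ) : HasGammaExpansion (n * s) (f ^ n) := by
  induction n with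
  | zero => simpa using one
  | succ n ih => simpa [pow_succ, add_mul] using ih.mul hf

lemma pow_add_C_mul_pow (hu : HasGammaExpansion s (f + g))
    (hv : HasGammaExpansion s (f - g)) {e : ℚ} (he : |e| ≤ 1) (n : ℕ) :
    HasGammaExpansion (n * s) (f ^ n + C e * g ^ n) := by
  have hweight (k : ℕ) : 0 ≤ (1 + e * (-1) ^ (n - k)) * n.choose k := by
    refine mul_nonneg ?_ (Nat.cast_nonneg _)
    have := neg_abs_le (e * (-1) ^ (n - k))
    rw [abs_mul, abs_pow, abs_neg, abs_one, one_pow, mul_one] at this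
    linarith
  have hhalf : C (2⁻¹ : ℚ) ^ n * 2 ^ n = 1 := by
    rw [← mul_pow, ← map_ofNat C 2, ← map_mul, inv_mul_cancel₀ two_ne_zero, map_one,
      one_pow]
  have hbinom := add_pow_add_mul_sub_pow (f + g) (f - g) (C e) n
  have hid : f ^ n + C e * g ^ n = C (2⁻¹ ^ n) * ∑ k ∈ range (n + 1),
      C ((1 + e * (-1) ^ (n - k)) * n.choose k) * ((f + g) ^ k * (f - g) ^ (n - k)) := by
    simp only [map_mul, map_add, map_one, map_pow, map_neg, map_natCast]
    rw [← hbinom]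
    linear_combination (-(f ^ n + C e * g ^ n)) * hhalf
  rw [hid]
  refine .C_mul (by positivity) (.sum _ fun k hk => .C_mul (hweight k) ?_)
  have hk : k * s + (n - k) * s = n * s := by
    rw [← add_mul, Nat.add_sub_cancel' (mem_range_succ_iff.1 hk)]
  exact hk ▸ (hu.pow k).mul (hv.pow (n - k))

end HasGammaExpansion

theorem stmt14 (f g : ℚ[X]) (a : ℚ)
    (hplus : GammaPositive (f + g) a) (hminus : GammaPositive (f - g) a) :
    ∀ r : ℕ, 0 < r →
      GammaPositive (f ^ r + g ^ r) (r * a) ∧ GammaPositive (f ^ r - g ^ r) (r * a) := by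
  intro n _
  obtain ⟨s, hs, hu⟩ := gammaPositive_iff.1 hplus
  obtain ⟨s', hs', hv⟩ := gammaPositive_iff.1 hminus
  rw [show s' = s by exact_mod_cast hs'.trans hs.symm] at hv
  have hpow {e : ℚ} (he : |e| ≤ 1) : GammaPositive (f ^ n + C e * g ^ n) (n * a) :=
    gammaPositive_iff.2 ⟨n * s, by push_cast; rw [hs]; ring, hu.pow_add_C_mul_pow hv he n⟩
  constructor
  · simpa using hpow (e := 1) (by norm_num)
  · simpa [sub_eq_add_neg] using hpow (e := -1) (by norm_num)
end

section
/- Let n ≥ 5 be an odd positive integer. Then both polynomials ∑_{π ∈ S_n, sgn(π)=1} t^{exc(π)} and ∑_{π ∈ S_n, sgn(π)=-1} t^{exc(π)} (summing over even and odd permutations of {1,...,n}, respectively) are gamma-positive with center of symmetry (n-1)/2. -/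
open Polynomial Finset

/-!
Let `A_n = ∑ t^exc(π)` and `S_n = ∑ sgn(π) t^exc(π)`. Building a permutation of `n + 1` letters
from one of `n` letters by choosing the image of the new first letter gives
`A_{n+1} = A_n + n t A_n + t(1 - t) A_n'` and `S_{n+1} = S_n - (n t S_n + t(1 - t) S_n')`, so
`S_{n+1} = (1 - t)^n`. The recurrence for `A_n` translates into a recurrence with nonnegative
coefficients for the γ-coefficients of `A_{n+1} = ∑ γ_{n,k} t^k (1 + t)^(n-2k)`, while
`(1 - t)^(2m) = ((1 + t)^2 - 4t)^m = ∑ C(m,k) (-4)^k t^k (1 + t)^(2m-2k)`. The even and odd parts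
are `(A_n ± S_n) / 2`, so for `n = 2m + 1` it suffices that `γ_{2m,k} ≥ 4^k C(m,k)`. Two steps of
the recurrence carry this bound from `m` to `m + 1` when `m ≥ 1`, and it holds at `m = 2`, where
`γ_4 = (1, 22, 16)`; at `m = 1` it fails, since `γ_{2,1} = 2`.
-/

open Equiv Equiv.Perm

lemma exc_eq_sum {n : ℕ} (π : Perm (Fin n)) : exc π = ∑ i, if i < π i then 1 else 0 := by
  rw [exc, card_filter]

lemma exc_decomposeFin_symm_zero {n : ℕ} (e : Perm (Fin n)) :
    exc (decomposeFin.symm (0, e)) = exc e := by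
  rw [exc_eq_sum, exc_eq_sum, Fin.sum_univ_succ]
  simp [Fin.succ_lt_succ_iff]

/-- `decomposeFin.symm ((e j).succ, e)` sends `0 ↦ e j + 1`, `j + 1 ↦ 0` and `i + 1 ↦ e i + 1`
otherwise: it gains the excedance at `0` and loses the one at `j + 1`, if there was one. -/
lemma exc_decomposeFin_symm_succ {n : ℕ} (e : Perm (Fin n)) (j : Fin n) :
    exc (decomposeFin.symm ((e j).succ, e)) = if j < e j then exc e else exc e + 1 := by
  have hterm : ∀ i, (if i.succ < decomposeFin.symm ((e j).succ, e) i.succ then 1 else 0) =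
      if i = j then 0 else if i < e i then 1 else 0 := by
    intro i
    rw [decomposeFin_symm_apply_succ]
    by_cases hij : i = j
    · simp [hij]
    · rw [swap_apply_of_ne_of_ne (Fin.succ_ne_zero _) (by simpa using e.injective.ne hij)]
      simp [hij, Fin.succ_lt_succ_iff]
  have hsplit := Fintype.sum_eq_add_sum_compl j fun i => if i < e i then 1 else 0
  rw [exc_eq_sum, Fin.sum_univ_succ, decomposeFin_symm_apply_zero, if_pos (Fin.succ_pos _),
    sum_congr rfl fun i _ => hterm i, Fintype.sum_eq_add_sum_compl j, if_pos rfl,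
    sum_congr rfl fun i hi => if_neg (mem_compl.1 hi ∘ mem_singleton.2),
    exc_eq_sum, hsplit]
  split_ifs <;> omega

lemma card_filter_lt_apply {n : ℕ} (e : Perm (Fin n)) : #{j | j < e j} = exc e := rfl

lemma X_mul_derivative_X_pow {R : Type*} [CommSemiring R] (k : ℕ) :
    X * derivative (X ^ k : R[X]) = C (k : R) * X ^ k := by
  cases k with
  | zero => simp
  | succ k => rw [derivative_X_pow, Nat.add_sub_cancel]; ring

lemma sum_X_pow_exc_decomposeFin_symm_succ {n : ℕ} (e : Perm (Fin n)) :
    ∑ q : Fin n, (X : ℚ[X]) ^ exc (decomposeFin.symm (q.succ, e)) =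
      C (n : ℚ) * X * X ^ exc e + (1 - X) * (X * derivative (X ^ exc e)) := by
  have hcard := card_filter_add_card_filter_not (s := univ) (fun j : Fin n => j < e j)
  rw [card_univ, Fintype.card_fin, card_filter_lt_apply] at hcard
  rw [← Equiv.sum_comp e]
  simp only [exc_decomposeFin_symm_succ, apply_ite (X ^ ·), sum_ite, sum_const, nsmul_eq_mul,
    card_filter_lt_apply, X_mul_derivative_X_pow, ← hcard, ← C_eq_natCast]
  push_cast
  rw [map_add]
  ring

/-- `χ = 1` gives the Eulerian polynomial `A_n`, `χ = intUnitsCast` the signed one `S_n`. -/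
noncomputable def excPoly (χ : ℤˣ →* ℚ) (n : ℕ) : ℚ[X] :=
  ∑ π : Perm (Fin n), C (χ (sign π)) * X ^ exc π

lemma excPoly_zero (χ : ℤˣ →* ℚ) : excPoly χ 0 = 1 := by
  simp [excPoly, exc]

lemma excPoly_succ (χ : ℤˣ →* ℚ) (n : ℕ) :
    excPoly χ (n + 1) = excPoly χ n + C (χ (-1)) *
      (C (n : ℚ) * X * excPoly χ n + (1 - X) * (X * derivative (excPoly χ n))) := by
  have hfiber : ∀ e : Perm (Fin n), ∑ p : Fin (n + 1),
      C (χ (sign (decomposeFin.symm (p, e)))) * X ^ exc (decomposeFin.symm (p, e)) =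
      C (χ (sign e)) * X ^ exc e + C (χ (-1)) * (C (n : ℚ) * X * (C (χ (sign e)) * X ^ exc e) +
        (1 - X) * (X * derivative (C (χ (sign e)) * X ^ exc e))) := by
    intro e
    simp only [Fin.sum_univ_succ, decomposeFin.symm_sign, exc_decomposeFin_symm_zero, if_pos,
      Fin.succ_ne_zero, if_false, map_mul, map_one, one_mul, mul_assoc, ← mul_sum,
      sum_X_pow_exc_decomposeFin_symm_succ, derivative_C_mul]
    ring
  rw [excPoly, ← decomposeFin.symm.sum_comp, Fintype.sum_prod_type_right,
    sum_congr rfl fun e _ => hfiber e]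
  simp only [excPoly, sum_add_distrib, ← mul_sum, derivative_sum]

lemma excPoly_eq_add_sum_filter (χ : ℤˣ →* ℚ) (n : ℕ) :
    excPoly χ n = ∑ π ∈ univ.filter (fun π : Perm (Fin n) => sign π = 1), X ^ exc π +
      C (χ (-1)) * ∑ π ∈ univ.filter (fun π : Perm (Fin n) => sign π = -1), X ^ exc π := by
  have hneg : ∀ π : Perm (Fin n), ¬ sign π = 1 ↔ sign π = -1 := fun π => by
    rcases Int.units_eq_one_or (sign π) with h | h <;> simp [h]
  rw [excPoly, ← sum_filter_add_sum_filter_not univ (fun π : Perm (Fin n) => sign π = 1),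
    filter_congr fun π _ => hneg π, mul_sum]
  congr 1 <;> refine sum_congr rfl fun π hπ => ?_ <;> rw [(mem_filter.1 hπ).2]
  simp

def intUnitsCast : ℤˣ →* ℚ := (Int.castRingHom ℚ : ℤ →* ℚ).comp (Units.coeHom ℤ)

@[simp]
lemma intUnitsCast_neg_one : intUnitsCast (-1) = -1 := by
  simp [intUnitsCast]

lemma excPoly_intUnitsCast (n : ℕ) : excPoly intUnitsCast (n + 1) = (1 - X) ^ n := by
  induction n with
  | zero => simp [excPoly_succ, excPoly_zero]
  | succ n ih =>
    rw [excPoly_succ, ih, intUnitsCast_neg_one, derivative_pow]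
    cases n with
    | zero => simp [sub_eq_add_neg]
    | succ n =>
      simp only [Nat.add_sub_cancel, derivative_sub, derivative_one, derivative_X, map_neg,
        map_one, C_eq_natCast]
      push_cast
      ring

/-- `eulerGamma n k` is the coefficient of `t^k (1 + t)^(n - 2k)` in `A_{n+1}`. The truncated
`n - 2 * k` only matters where `eulerGamma n k = 0`. -/
def eulerGamma : ℕ → ℕ → ℕ
  | _, 0 => 1
  | 0, _ + 1 => 0
  | n + 1, k + 1 => (k + 2) * eulerGamma n (k + 1) + 2 * (n - 2 * k) * eulerGamma n k

@[simp]
lemma eulerGamma_zero_right (n : ℕ) : eulerGamma n 0 = 1 := by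
  cases n <;> rfl

lemma eulerGamma_succ_succ (n k : ℕ) : eulerGamma (n + 1) (k + 1) =
    (k + 2) * eulerGamma n (k + 1) + 2 * (n - 2 * k) * eulerGamma n k := rfl

lemma eulerGamma_eq_zero_of_lt {n k : ℕ} (h : n < 2 * k) : eulerGamma n k = 0 := by
  induction n generalizing k with
  | zero => obtain ⟨k, rfl⟩ := Nat.exists_eq_succ_of_ne_zero (by omega : k ≠ 0); rfl
  | succ n ih =>
    obtain ⟨k, rfl⟩ := Nat.exists_eq_succ_of_ne_zero (by omega : k ≠ 0)
    rw [eulerGamma_succ_succ, ih (by omega)]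
    rcases Nat.lt_or_ge n (2 * k) with h' | h'
    · simp [ih h']
    · simp [show n - 2 * k = 0 by omega]

lemma le_eulerGamma_succ (n k : ℕ) : (k + 1) * eulerGamma n k ≤ eulerGamma (n + 1) k := by
  cases k with
  | zero => simp
  | succ k => rw [eulerGamma_succ_succ]; exact Nat.le_add_right _ _

noncomputable def eulerGammaPoly (n : ℕ) : ℚ[X] :=
  ∑ k ∈ range (n + 1), C (eulerGamma n k : ℚ) * X ^ k * (1 + X) ^ (n - 2 * k)

lemma gammaBasis_recurrence (c : ℚ) (k l : ℕ) :
    C c * X ^ k * (1 + X) ^ l + (C ((2 * k + l + 1 : ℕ) : ℚ) * X * (C c * X ^ k * (1 + X) ^ l) +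
      (1 - X) * (X * derivative (C c * X ^ k * (1 + X) ^ l))) =
    C ((k + 1) * c) * X ^ k * (1 + X) ^ (l + 1) +
      C (2 * l * c) * X ^ (k + 1) * (1 + X) ^ (l - 1) := by
  rcases k with _ | k <;> rcases l with _ | l <;>
    simp [derivative_mul, derivative_pow, map_ofNat] <;> ring

lemma eulerGammaPoly_succ (n : ℕ) :
    eulerGammaPoly (n + 1) = eulerGammaPoly n + (C ((n + 1 : ℕ) : ℚ) * X * eulerGammaPoly n +
      (1 - X) * (X * derivative (eulerGammaPoly n))) := by
  have hterm : ∀ k ∈ range (n + 1),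
      C (eulerGamma n k : ℚ) * X ^ k * (1 + X) ^ (n - 2 * k) +
        (C ((n + 1 : ℕ) : ℚ) * X * (C (eulerGamma n k : ℚ) * X ^ k * (1 + X) ^ (n - 2 * k)) +
        (1 - X) * (X * derivative (C (eulerGamma n k : ℚ) * X ^ k * (1 + X) ^ (n - 2 * k)))) =
      C ((k + 1) * eulerGamma n k : ℚ) * X ^ k * (1 + X) ^ (n + 1 - 2 * k) +
        C (2 * (n - 2 * k : ℕ) * eulerGamma n k : ℚ) * X ^ (k + 1) *
          (1 + X) ^ (n + 1 - 2 * (k + 1)) := by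
    intro k _
    rcases Nat.lt_or_ge n (2 * k) with hk | hk
    · simp [eulerGamma_eq_zero_of_lt hk]
    · have := gammaBasis_recurrence (eulerGamma n k) k (n - 2 * k)
      rwa [show 2 * k + (n - 2 * k) + 1 = n + 1 by omega,
        show n - 2 * k + 1 = n + 1 - 2 * k by omega, show n - 2 * k - 1 = n + 1 - 2 * (k + 1) by omega] at this
  have hshift : ∑ k ∈ range (n + 1),
      C ((k + 1) * eulerGamma n k : ℚ) * X ^ k * (1 + X) ^ (n + 1 - 2 * k) =
      (1 + X) ^ (n + 1) + ∑ k ∈ range (n + 1),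
        C ((k + 2) * eulerGamma n (k + 1) : ℚ) * X ^ (k + 1) * (1 + X) ^ (n + 1 - 2 * (k + 1)) := by
    rw [sum_range_succ', sum_range_succ _ n, eulerGamma_eq_zero_of_lt (by omega : n < 2 * (n + 1))]
    simp only [eulerGamma_zero_right]
    push_cast
    rw [add_comm]
    simp [add_assoc, one_add_one_eq_two]
  unfold eulerGammaPoly
  rw [derivative_sum, mul_sum, mul_sum, mul_sum, ← sum_add_distrib, ← sum_add_distrib,
    sum_congr rfl hterm, sum_add_distrib, hshift, sum_range_succ' _ (n + 1)]
  simp only [eulerGamma_succ_succ, eulerGamma_zero_right]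
  push_cast
  simp only [add_mul, map_add, map_one, sum_add_distrib]
  ring

lemma excPoly_one_succ (n : ℕ) : excPoly 1 (n + 1) = eulerGammaPoly n := by
  induction n with
  | zero => simp [excPoly_succ, excPoly_zero, eulerGammaPoly]
  | succ n ih => rw [excPoly_succ, ih, eulerGammaPoly_succ, MonoidHom.one_apply, map_one, one_mul]

lemma two_mul_sum_filter_sign (n : ℕ) :
    2 * ∑ π ∈ univ.filter (fun π : Perm (Fin n) => sign π = 1), (X : ℚ[X]) ^ exc π =
        excPoly 1 n + excPoly intUnitsCast n ∧
      2 * ∑ π ∈ univ.filter (fun π : Perm (Fin n) => sign π = -1), (X : ℚ[X]) ^ exc π =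
        excPoly 1 n - excPoly intUnitsCast n := by
  rw [excPoly_eq_add_sum_filter, excPoly_eq_add_sum_filter, intUnitsCast_neg_one,
    MonoidHom.one_apply]
  constructor <;> simp only [map_one, map_neg] <;> ring

lemma four_pow_mul_choose_le_eulerGamma_step {m : ℕ} (hm : 1 ≤ m)
    (ih : ∀ k, 4 ^ k * m.choose k ≤ eulerGamma (2 * m) k) (k : ℕ) :
    4 ^ k * (m + 1).choose k ≤ eulerGamma (2 * m + 2) k := by
  rcases k with _ | j
  · simp
  have hhi : 4 * (4 ^ j * m.choose (j + 1)) ≤ (j + 2) * eulerGamma (2 * m + 1) (j + 1) := by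
    calc 4 * (4 ^ j * m.choose (j + 1)) ≤ eulerGamma (2 * m) (j + 1) := by
          rw [← mul_assoc, ← pow_succ']; exact ih (j + 1)
      _ ≤ (j + 2) * eulerGamma (2 * m) (j + 1) := Nat.le_mul_of_pos_left _ (by omega)
      _ ≤ eulerGamma (2 * m + 1) (j + 1) := le_eulerGamma_succ _ _
      _ ≤ (j + 2) * eulerGamma (2 * m + 1) (j + 1) := Nat.le_mul_of_pos_left _ (by omega)
  have hlo : (j + 1) * (4 ^ j * m.choose j) ≤ eulerGamma (2 * m + 1) j :=
    (Nat.mul_le_mul_left _ (ih j)).trans (le_eulerGamma_succ _ _)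
  have hlo' : 4 * (4 ^ j * m.choose j) ≤ 2 * (2 * m + 1 - 2 * j) * eulerGamma (2 * m + 1) j := by
    rcases Nat.lt_or_ge m j with h | h
    · simp [Nat.choose_eq_zero_of_lt h]
    have h4 : 4 ≤ 2 * (2 * m + 1 - 2 * j) * (j + 1) := by
      obtain ⟨d, hd⟩ : ∃ d, 2 * m + 1 - 2 * j = d + 1 := ⟨2 * m - 2 * j, by omega⟩
      rcases j with _ | j
      · rw [hd]; omega
      · rw [hd]; nlinarith
    calc 4 * (4 ^ j * m.choose j)
        ≤ 2 * (2 * m + 1 - 2 * j) * (j + 1) * (4 ^ j * m.choose j) := Nat.mul_le_mul_right _ h4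
      _ ≤ 2 * (2 * m + 1 - 2 * j) * eulerGamma (2 * m + 1) j := by
        rw [mul_assoc]; exact Nat.mul_le_mul_left _ hlo
  rw [eulerGamma_succ_succ, Nat.choose_succ_succ', pow_succ]
  nlinarith

lemma four_pow_mul_choose_le_eulerGamma {m : ℕ} (hm : 2 ≤ m) (k : ℕ) :
    4 ^ k * m.choose k ≤ eulerGamma (2 * m) k := by
  induction m, hm using Nat.le_induction generalizing k with
  | base =>
    rcases k with _ | _ | _ | k
    iterate 3 decide
    simp [Nat.choose_eq_zero_of_lt (by omega : 2 < k + 3)]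
  | succ m hm ih => exact four_pow_mul_choose_le_eulerGamma_step (by omega) ih k

lemma excPoly_one_odd (m : ℕ) : excPoly 1 (2 * m + 1) =
    ∑ k ∈ range (m + 1), C (eulerGamma (2 * m) k : ℚ) * X ^ k * (1 + X) ^ (2 * m - 2 * k) := by
  rw [excPoly_one_succ, eulerGammaPoly]
  refine (sum_subset (range_subset_range.2 (by omega)) fun k _ hk => ?_).symm
  rw [eulerGamma_eq_zero_of_lt (by simp at hk; omega), Nat.cast_zero, map_zero, zero_mul, zero_mul]

lemma excPoly_intUnitsCast_odd (m : ℕ) : excPoly intUnitsCast (2 * m + 1) =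
    ∑ k ∈ range (m + 1), C ((m.choose k : ℚ) * (-4) ^ k) * X ^ k * (1 + X) ^ (2 * m - 2 * k) := by
  have hsq : (1 - X : ℚ[X]) ^ 2 = C (-4) * X + (1 + X) ^ 2 := by
    rw [map_neg, map_ofNat]; ring
  rw [excPoly_intUnitsCast, pow_mul, hsq, add_pow]
  refine sum_congr rfl fun k hk => ?_
  rw [← pow_mul, Nat.mul_sub, map_mul, map_pow, map_natCast]
  ring

lemma gammaPositive_of_two_mul_eq_sum {f : ℚ[X]} {m : ℕ} {c : ℕ → ℚ} (hc : ∀ k, 0 ≤ c k)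
    (hf : 2 * f = ∑ k ∈ range (m + 1), C (c k) * X ^ k * (1 + X) ^ (2 * m - 2 * k)) :
    GammaPositive f m := by
  refine ⟨2 * m, 0, Nat.zero_le _, by push_cast; ring, fun k => c k / 2,
    fun k => div_nonneg (hc k) zero_le_two, ?_⟩
  have hhalf : f = C 2⁻¹ * (2 * f) := by
    rw [← mul_assoc, ← map_ofNat C 2, ← map_mul]; norm_num
  rw [hhalf, hf, mul_sum, Nat.sub_zero, Nat.mul_div_cancel_left _ two_pos]
  refine sum_congr rfl fun k _ => ?_
  rw [zero_add]
  simp only [div_eq_mul_inv, map_mul]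
  ring

theorem stmt16 (n : ℕ) (hn : 5 ≤ n) (hodd : Odd n) :
    GammaPositive (∑ π ∈ (Finset.univ.filter fun π : Equiv.Perm (Fin n) => Equiv.Perm.sign π = 1),
        X ^ exc π) (((n : ℚ) - 1) / 2) ∧
    GammaPositive (∑ π ∈ (Finset.univ.filter fun π : Equiv.Perm (Fin n) => Equiv.Perm.sign π = -1),
        X ^ exc π) (((n : ℚ) - 1) / 2) := by
  obtain ⟨m, rfl⟩ := hodd
  have hbound : ∀ k, |(m.choose k : ℚ) * (-4) ^ k| ≤ eulerGamma (2 * m) k := fun k => by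
    rw [abs_mul, abs_pow, abs_neg, Nat.abs_cast, mul_comm]
    exact_mod_cast four_pow_mul_choose_le_eulerGamma (by omega) k
  have hcenter : (((2 * m + 1 : ℕ) : ℚ) - 1) / 2 = m := by push_cast; ring
  obtain ⟨hEven, hOdd⟩ := two_mul_sum_filter_sign (2 * m + 1)
  rw [excPoly_one_odd, excPoly_intUnitsCast_odd] at hEven hOdd
  rw [← sum_add_distrib] at hEven
  rw [← sum_sub_distrib] at hOdd
  simp only [← add_mul, ← sub_mul, ← C_add, ← C_sub] at hEven hOdd
  rw [hcenter]
  exact ⟨gammaPositive_of_two_mul_eq_sum (fun k => by linarith [abs_le.1 (hbound k)]) hEven,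
    gammaPositive_of_two_mul_eq_sum (fun k => by linarith [abs_le.1 (hbound k)]) hOdd⟩
end

section
/- For every integer n ≥ 2, the signed excedance enumerator over derangements satisfies ∑_{π ∈ D_n} sgn(π) · t^{exc(π)} = (-1)^{n-1} · t · [n-1]_t as polynomials in ℚ[t], where D_n is the set of derangements of {1,...,n}. -/
/-! The signed excedance enumerator is the determinant of the matrix with `0` on the diagonal,
`1` above it and `t` below it. For a matrix with constant entries `a` above, `b` below and `c`
on the diagonal, adding `s` to every entry changes the determinant affinely in `s` (subtract one
row from all others); at `s = -a` and `s = -b` the matrix is triangular, which gives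
`(b - a) det = b (c - a)^n - a (c - b)^n`. For `a = 1`, `b = t`, `c = 0` one divides by `t - 1`. -/

open Polynomial Finset

/-- Mod-k-alternating derangements: elements of `MP n k r` with no fixed point. -/
def MPD (n k r : ℕ) : Finset (Equiv.Perm (Fin n)) :=
  (MP n k r).filter fun π => ∀ i : Fin n, π i ≠ i

/-- The q-analogue `[m]_t = 1 + t + ⋯ + t^(m-1)` as a polynomial in `ℚ[X]`. -/
noncomputable def qnat (m : ℕ) : ℚ[X] := ∑ i ∈ Finset.range m, X ^ i

open Matrix

section ConstToeplitz

variable {R : Type*} [CommRing R]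

theorem exists_det_add_smul_replicateRow_eq_add_mul {n : Type*} [Fintype n] [DecidableEq n]
    (A : Matrix n n R) (v : n → R) :
    ∃ α β : R, ∀ s : R, (A + s • replicateRow n v).det = α + s * β := by
  rcases isEmpty_or_nonempty n with _ | ⟨⟨k⟩⟩
  · exact ⟨1, 0, fun s => by simp⟩
  · let B : Matrix n n R := of fun i j => if i = k then A i j else A i j - A k j
    refine ⟨(updateRow B k (A k)).det, (updateRow B k v).det, fun s => ?_⟩
    have hrows : (A + s • replicateRow n v).det = (updateRow B k (A k + s • v)).det := by
      refine det_eq_of_forall_row_eq_smul_add_const (fun i => if i = k then 0 else 1) k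
        (if_pos rfl) fun i j => ?_
      by_cases hi : i = k
      · subst hi; simp
      · simp [B, hi, add_comm (A k j), sub_add_add_cancel]
    rw [hrows, det_updateRow_add, det_updateRow_smul]

variable {ι : Type*} [LinearOrder ι]

def constToeplitz (a b c : R) : Matrix ι ι R :=
  of fun i j => if i < j then a else if j < i then b else c

theorem constToeplitz_add_smul_replicateRow_one (a b c s : R) :
    (constToeplitz a b c : Matrix ι ι R) + s • replicateRow ι 1 =
      constToeplitz (a + s) (b + s) (c + s) := by
  ext i j
  simp only [constToeplitz, Matrix.add_apply, Matrix.smul_apply, replicateRow_apply, of_apply,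
    Pi.one_apply, smul_eq_mul, mul_one]
  split_ifs <;> rfl

variable [Fintype ι]

theorem det_constToeplitz_zero_above (b c : R) :
    (constToeplitz 0 b c : Matrix ι ι R).det = c ^ Fintype.card ι := by
  rw [det_of_isLowerTriangular]
  · simp [constToeplitz]
  · intro i j hij
    simp [constToeplitz, show i < j from hij]

theorem det_constToeplitz_zero_below (a c : R) :
    (constToeplitz a 0 c : Matrix ι ι R).det = c ^ Fintype.card ι := by
  rw [det_of_isUpperTriangular]
  · simp [constToeplitz]
  · intro i j hij
    have hji : j < i := hij
    simp [constToeplitz, hji, hji.not_gt]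

theorem sub_mul_det_constToeplitz (a b c : R) :
    (b - a) * (constToeplitz a b c : Matrix ι ι R).det =
      b * (c - a) ^ Fintype.card ι - a * (c - b) ^ Fintype.card ι := by
  obtain ⟨α, β, haffine⟩ :=
    exists_det_add_smul_replicateRow_eq_add_mul (constToeplitz a b c : Matrix ι ι R) 1
  simp only [constToeplitz_add_smul_replicateRow_one] at haffine
  have h0 := haffine 0
  have ha := haffine (-a)
  have hb := haffine (-b)
  simp only [add_zero, zero_mul, add_neg_cancel, ← sub_eq_add_neg] at h0 ha hb
  rw [det_constToeplitz_zero_above] at ha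
  rw [det_constToeplitz_zero_below] at hb
  rw [h0, ha, hb]
  ring

end ConstToeplitz

theorem prod_constToeplitz_perm_eq_pow_exc {R : Type*} [CommRing R] {n : ℕ} (x : R)
    (σ : Equiv.Perm (Fin n)) (hσ : ∀ i, σ i ≠ i) :
    ∏ i, (constToeplitz 1 x 0 : Matrix (Fin n) (Fin n) R) (σ i) i = x ^ exc σ := by
  have hfactor : ∀ i, (constToeplitz 1 x 0 : Matrix (Fin n) (Fin n) R) (σ i) i =
      if i < σ i then x else 1 := fun i => by
    rcases lt_trichotomy (σ i) i with h | h | h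
    · simp [constToeplitz, h, h.not_gt]
    · exact absurd h (hσ i)
    · simp [constToeplitz, h, h.not_gt]
  simp only [hfactor, prod_ite, prod_const_one, mul_one, prod_const, exc, gt_iff_lt]

theorem sum_derangements_sign_mul_pow_exc {R : Type*} [CommRing R] (n : ℕ) (x : R) :
    ∑ π ∈ (univ.filter fun π : Equiv.Perm (Fin n) => ∀ i : Fin n, π i ≠ i),
        ((Equiv.Perm.sign π : ℤ) : R) * x ^ exc π =
      (constToeplitz 1 x 0 : Matrix (Fin n) (Fin n) R).det := by
  calc _ = ∑ σ ∈ univ.filter fun π : Equiv.Perm (Fin n) => ∀ i, π i ≠ i,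
          ((Equiv.Perm.sign σ : ℤ) : R) * ∏ i, (constToeplitz 1 x 0 : Matrix _ _ R) (σ i) i :=
        sum_congr rfl fun σ hσ => by
          rw [prod_constToeplitz_perm_eq_pow_exc x σ (mem_filter.mp hσ).2]
    _ = _ := sum_filter_of_ne fun σ _ hprod i hi =>
        hprod (mul_eq_zero_of_right _ (prod_eq_zero (mem_univ i) (by simp [constToeplitz, hi])))
    _ = _ := (det_apply' _).symm

theorem stmt18 (n : ℕ) (hn : 2 ≤ n) :
    ∑ π ∈ (Finset.univ.filter fun π : Equiv.Perm (Fin n) => ∀ i : Fin n, π i ≠ i),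
        ((Equiv.Perm.sign π : ℤ) : ℚ[X]) * X ^ exc π
      = (-1) ^ (n - 1) * X * qnat (n - 1) := by
  obtain ⟨m, rfl⟩ : ∃ m, n = m + 1 := ⟨n - 1, by omega⟩
  refine mul_left_cancel₀ (X_sub_C_ne_zero (1 : ℚ)) ?_
  have hdet := sub_mul_det_constToeplitz (ι := Fin (m + 1)) (1 : ℚ[X]) X 0
  rw [sum_derangements_sign_mul_pow_exc, C_1, hdet, Nat.add_sub_cancel, qnat, Fintype.card_fin]
  linear_combination -(-1) ^ m * X * geom_sum_mul (X : ℚ[X]) m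
end

section
/- For every positive integer n, the signed descent enumerator SgnDes_n(t) = ∑_{π ∈ S_n} sgn(π) · t^{des(π)} satisfies: SgnDes_n(t) = (1-t)^m · A_m(t) if n = 2m, and SgnDes_n(t) = (1-t)^m · A_{m+1}(t) if n = 2m+1, as polynomials in ℚ[t]. -/
open Polynomial Finset

/-- Number of descents of a permutation of `Fin n`: indices `i` with `i + 1 < n` and
`π (i+1) < π i`. -/
def des {n : ℕ} (π : Equiv.Perm (Fin n)) : ℕ :=
  (Finset.univ.filter fun i : Fin n =>
    (i : ℕ) + 1 < n ∧ π ⟨((i : ℕ) + 1) % n, Nat.mod_lt _ i.pos⟩ < π i).card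

/-- The Eulerian polynomial `A_m(t) = ∑_{π ∈ S_m} t^(des π)`. -/
noncomputable def Eulerian (m : ℕ) : ℚ[X] :=
  ∑ π : Equiv.Perm (Fin m), X ^ des π

/-!
Sorting a word `f : Fin n → Fin (q + 1)` gives a permutation `Tuple.sort f`. Adding to the `i`-th
letter of `f ∘ π` the number of ascents of `π` before position `i` turns the words sorted by `π`
into the strictly increasing maps `Fin n → Fin (q + n - des π)`, so there are
`(q + n - des π).choose n` of them. Hence for any weight `w` the coefficient of `t ^ q` in
`(∑ π, w π * t ^ des π) / (1 - t) ^ (n + 1)` is `∑ f, w (sort f)`.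

For `w = 1` this is `(q + 1) ^ n`. For `w = sign` we have `sign (sort f) = (-1) ^ inversions f`,
and the signed number of words is `(q + 1) ^ ⌈n / 2⌉`: swapping the first two letters changes the
number of inversions by one, so words whose first two letters differ cancel in pairs, while `a a g`
has the parity of `g`. So with `k = ⌈n / 2⌉`, `SgnDes_n(t) / (1 - t) ^ (n + 1)` and
`A_k(t) / (1 - t) ^ (k + 1)` have the same coefficients.
-/

open Equiv

lemma sum_sum_ite_lt_mul {α : Type*} [LinearOrder α] [Fintype α] (x : α → ℤ) :
    ∑ a, ∑ b, (if b < a then -1 else 1) * (x a * x b) = ∑ a, x a ^ 2 := by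
  set T := ∑ a, ∑ b, (if b < a then -1 else 1) * (x a * x b)
  have hswap : ∑ a, ∑ b, (if a < b then -1 else 1) * (x a * x b) = T := by
    rw [sum_comm]
    exact sum_congr rfl fun a _ => sum_congr rfl fun b _ => by ring
  have hsym (a b : α) : (if b < a then -1 else 1) + (if a < b then -1 else 1)
      = if a = b then (2 : ℤ) else 0 := by
    rcases lt_trichotomy a b with h | rfl | h
    · simp [h, h.ne, lt_asymm h]
    · simp
    · simp [h, h.ne', lt_asymm h]
  have : T + T = 2 * ∑ a, x a ^ 2 :=
    calc T + T
        = ∑ a, ∑ b, ((if b < a then -1 else 1) + (if a < b then -1 else 1)) * (x a * x b) := by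
          nth_rw 2 [← hswap]
          simp only [T, ← sum_add_distrib, add_mul]
      _ = 2 * ∑ a, x a ^ 2 := by simp [hsym, mul_sum, sq]
  linarith

lemma sum_fun_fin_succ {α M : Type*} [Fintype α] [AddCommMonoid M] {n : ℕ}
    (F : (Fin (n + 1) → α) → M) :
    ∑ f, F f = ∑ a, ∑ g : Fin n → α, F (Fin.cons a g) := by
  rw [← Fintype.sum_prod_type']
  exact (Fintype.sum_equiv (Fin.consEquiv fun _ => α) _ _ fun _ => rfl).symm

namespace Tuple

variable {α : Type*} [LinearOrder α] {n : ℕ}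

def inversions (f : Fin n → α) : ℕ :=
  #{p : Fin n × Fin n | p.1 < p.2 ∧ f p.2 < f p.1}

lemma inversions_eq_sum (f : Fin n → α) :
    inversions f = ∑ i, ∑ j, if i < j ∧ f j < f i then 1 else 0 := by
  rw [inversions, card_filter, Fintype.sum_prod_type]

lemma inversions_cons (a : α) (f : Fin n → α) :
    inversions (Fin.cons a f : Fin (n + 1) → α) = #{j | f j < a} + inversions f := by
  simp only [inversions_eq_sum, card_filter, Fin.sum_univ_succ, Fin.cons_zero, Fin.cons_succ,
    Fin.succ_pos, Fin.succ_lt_succ_iff, Fin.not_lt_zero, true_and, false_and,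
    if_false, zero_add]

lemma symm_sort_lt_symm_sort_iff {f : Fin n → α} {i j : Fin n} (hij : i < j) :
    (sort f).symm i < (sort f).symm j ↔ f i ≤ f j := by
  obtain ⟨hmono, hties⟩ := eq_sort_iff.mp (rfl : sort f = sort f)
  set σ := sort f
  have hi : σ (σ.symm i) = i := σ.apply_symm_apply i
  have hj : σ (σ.symm j) = j := σ.apply_symm_apply j
  refine ⟨fun h => ?_, fun h => ?_⟩
  · simpa [hi, hj] using hmono h.le
  · by_contra hlt
    have hlt' : σ.symm j < σ.symm i := (not_lt.mp hlt).lt_of_ne (by simpa using hij.ne')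
    have hle : f j ≤ f i := by simpa [hi, hj] using hmono hlt'.le
    have := hties _ _ hlt' (by rw [hi, hj]; exact hle.antisymm h)
    rw [hi, hj] at this
    exact lt_asymm hij this

lemma sign_sort (f : Fin n → α) :
    ((sort f).sign : ℤ) = (-1) ^ inversions f := by
  rw [← Equiv.Perm.sign_inv, Equiv.Perm.sign_eq_prod_prod_Iio, inversions, ← prod_const,
    prod_filter, Fintype.prod_prod_type, prod_comm]
  push_cast
  refine prod_congr rfl fun j _ => ?_
  rw [← filter_gt_eq_Iio, prod_filter]
  refine prod_congr rfl fun i _ => ?_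
  by_cases hij : i < j
  · simp [hij, symm_sort_lt_symm_sort_iff hij, ← not_lt, apply_ite (fun u : ℤˣ => (u : ℤ)),
      ite_not]
  · simp [hij]

lemma card_filter_cons_lt (a b : α) (g : Fin n → α) :
    #{j | (Fin.cons b g : Fin (n + 1) → α) j < a}
      = (if b < a then 1 else 0) + #{j | g j < a} := by
  simp only [card_filter, Fin.sum_univ_succ, Fin.cons_zero, Fin.cons_succ]

lemma inversions_cons_cons (a b : α) (g : Fin n → α) :
    inversions (Fin.cons a (Fin.cons b g : Fin (n + 1) → α) : Fin (n + 2) → α)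
      = (if b < a then 1 else 0) + #{j | g j < a} + #{j | g j < b} + inversions g := by
  rw [inversions_cons, inversions_cons, card_filter_cons_lt]
  ring

theorem sum_neg_one_pow_inversions [Fintype α] (n : ℕ) :
    ∑ f : Fin n → α, (-1 : ℤ) ^ inversions f = (Fintype.card α : ℤ) ^ ((n + 1) / 2) := by
  induction n using Nat.twoStepInduction with
  | zero => simp [inversions]
  | one => simp [inversions, Subsingleton.elim _ (0 : Fin 1)]
  | more n ih _ =>
    set ε : (Fin n → α) → α → ℤ := fun g a => (-1) ^ #{j | g j < a}
    have hcons (a b : α) (g : Fin n → α) :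
        (-1 : ℤ) ^ inversions (Fin.cons a (Fin.cons b g : Fin (n + 1) → α) : Fin (n + 2) → α)
          = (if b < a then -1 else 1) * (ε g a * ε g b) * (-1) ^ inversions g := by
      rw [inversions_cons_cons]
      split_ifs <;> simp only [ε, pow_add] <;> ring
    have hpair (g : Fin n → α) :
        ∑ a, ∑ b, (if b < a then -1 else 1) * (ε g a * ε g b) = Fintype.card α := by
      rw [sum_sum_ite_lt_mul]
      simp [ε, ← pow_mul, pow_mul']
    calc ∑ f : Fin (n + 2) → α, (-1 : ℤ) ^ inversions f
        = ∑ a, ∑ b, ∑ g, (if b < a then -1 else 1) * (ε g a * ε g b) * (-1) ^ inversions g := by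
          simp only [sum_fun_fin_succ, hcons]
      _ = ∑ g, (∑ a, ∑ b, (if b < a then -1 else 1) * (ε g a * ε g b)) * (-1) ^ inversions g := by
          simp only [sum_mul]
          exact (sum_congr rfl fun a _ => sum_comm).trans sum_comm
      _ = Fintype.card α * ∑ g : Fin n → α, (-1) ^ inversions g := by
          simp only [hpair, mul_sum]
      _ = (Fintype.card α : ℤ) ^ ((n + 2 + 1) / 2) := by
          rw [ih, show (n + 2 + 1) / 2 = (n + 1) / 2 + 1 by omega, pow_succ, mul_comm]

end Tuple

lemma card_filter_strictMono (n M : ℕ) : #{h : Fin n → Fin M | StrictMono h} = M.choose n := by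
  let e : {h : Fin n → Fin M // StrictMono h} ≃ (Fin n ↪o Fin M) :=
    { toFun h := OrderEmbedding.ofStrictMono h.1 h.2
      invFun e := ⟨e, e.strictMono⟩
      left_inv _ := rfl
      right_inv _ := rfl }
  rw [← Fintype.card_subtype, ← Nat.card_eq_fintype_card,
    Nat.card_congr (e.trans Set.powersetCard.ofFinEmbEquiv), Set.powersetCard.card,
    Nat.card_eq_fintype_card, Fintype.card_fin]

lemma des_le_card {n : ℕ} (π : Perm (Fin n)) : des π ≤ n :=
  (card_filter_le _ _).trans_eq (card_fin n)

section Ascents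

variable {N : ℕ} (π : Perm (Fin (N + 1)))

lemma des_eq_card : des π = #{k : Fin N | π k.succ < π k.castSucc} := by
  rw [des, card_filter, card_filter, Fin.sum_univ_castSucc]
  simp only [Fin.val_castSucc, Fin.val_last, lt_self_iff_false, false_and, if_false, add_zero,
    Nat.mod_eq_of_lt (Nat.succ_lt_succ (Fin.is_lt _)), Nat.add_lt_add_iff_right, Fin.is_lt,
    true_and]
  rfl

lemma des_le : des π ≤ N := by
  rw [des_eq_card]
  exact (card_filter_le _ _).trans (by simp)

def ascentsBelow : Fin (N + 1) → ℕ :=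
  Fin.partialSum fun k : Fin N => if π k.castSucc < π k.succ then 1 else 0

lemma ascentsBelow_zero : ascentsBelow π 0 = 0 := Fin.partialSum_zero _

lemma ascentsBelow_succ (k : Fin N) :
    ascentsBelow π k.succ
      = ascentsBelow π k.castSucc + if π k.castSucc < π k.succ then 1 else 0 :=
  Fin.partialSum_succ _ _

lemma ascentsBelow_last : ascentsBelow π (Fin.last N) = N - des π := by
  have hasc :
      #{k : Fin N | π k.castSucc < π k.succ} = #{k : Fin N | ¬ π k.succ < π k.castSucc} :=
    congrArg card <| filter_congr fun k _ => by
      rw [not_lt]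
      exact ⟨le_of_lt, fun h => h.lt_of_ne (π.injective.ne k.castSucc_lt_succ.ne)⟩
  have htotal :=
    card_filter_add_card_filter_not (s := univ) fun k : Fin N => π k.succ < π k.castSucc
  rw [card_univ, Fintype.card_fin] at htotal
  rw [ascentsBelow, Fin.partialSum, Fin.val_last, List.take_of_length_le (by simp),
    List.sum_ofFn, ← card_filter, des_eq_card]
  omega

lemma monotone_ascentsBelow : Monotone (ascentsBelow π) :=
  Fin.monotone_iff_le_succ.2 fun k => by simp [ascentsBelow_succ]

lemma monotone_sub_ascentsBelow {h : Fin (N + 1) → ℕ} (hh : StrictMono h) :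
    Monotone fun i => (h i : ℤ) - ascentsBelow π i := by
  refine Fin.monotone_iff_le_succ.2 fun k => ?_
  have := hh k.castSucc_lt_succ
  simp only [ascentsBelow_succ]
  split_ifs <;> push_cast <;> omega

lemma sort_eq_iff_strictMono {Q : ℕ} (f : Fin (N + 1) → Fin Q) :
    Tuple.sort f = π ↔ StrictMono fun i => (f (π i) : ℕ) + ascentsBelow π i := by
  rw [eq_comm, Tuple.eq_sort_iff', Fin.strictMono_iff_lt_succ, Fin.strictMono_iff_lt_succ]
  refine forall_congr' fun k => ?_
  have hne : π k.castSucc ≠ π k.succ := π.injective.ne k.castSucc_lt_succ.ne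
  change toLex (f (π k.castSucc), π k.castSucc) < toLex (f (π k.succ), π k.succ) ↔ _
  rw [Prod.Lex.toLex_lt_toLex, ascentsBelow_succ]
  dsimp only
  rw [Fin.lt_def, ← Fin.val_inj]
  split_ifs with h
  · simp only [Fin.val_fin_lt, h, and_true]
    omega
  · simp [h]

lemma card_filter_sort_eq_card_filter_strictMono (q : ℕ) :
    #{f : Fin (N + 1) → Fin (q + 1) | Tuple.sort f = π}
      = #{h : Fin (N + 1) → Fin (q + 1 + (N - des π)) | StrictMono h} := by
  have hasc_le (i : Fin (N + 1)) : ascentsBelow π i ≤ N - des π :=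
    ascentsBelow_last π ▸ monotone_ascentsBelow π (Fin.le_last i)
  have hbounds {h : Fin (N + 1) → Fin (q + 1 + (N - des π))} (hh : StrictMono h)
      (i : Fin (N + 1)) :
      ascentsBelow π i ≤ h i ∧ (h i : ℕ) - ascentsBelow π i < q + 1 := by
    have hmono := monotone_sub_ascentsBelow π (Fin.val_strictMono.comp hh)
    have h0 := hmono (Fin.zero_le i)
    have hlast := hmono (Fin.le_last i)
    simp only [Function.comp_apply, ascentsBelow_zero, ascentsBelow_last] at h0 hlast
    have := (h (Fin.last N)).isLt
    omega
  refine card_bij' (fun f _ i => ⟨f (π i) + ascentsBelow π i, by have := hasc_le i; omega⟩)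
    (fun h hh j => ⟨h (π.symm j) - ascentsBelow π (π.symm j),
      (hbounds (mem_filter.1 hh).2 _).2⟩) ?_ ?_ ?_ ?_
  · intro f hf
    simp only [mem_filter, mem_univ, true_and] at hf ⊢
    exact (sort_eq_iff_strictMono π f).1 hf
  · intro h hh
    simp only [mem_filter, mem_univ, true_and] at hh ⊢
    rw [sort_eq_iff_strictMono]
    convert Fin.val_strictMono.comp hh using 2 with i
    simp [Nat.sub_add_cancel (hbounds hh i).1]
  · intro f _
    ext j
    simp
  · intro h hh
    ext i
    simp [Nat.sub_add_cancel (hbounds (mem_filter.1 hh).2 i).1]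

end Ascents

theorem card_filter_sort_eq (q : ℕ) {n : ℕ} (π : Perm (Fin n)) :
    #{f : Fin n → Fin (q + 1) | Tuple.sort f = π} = (q + n - des π).choose n := by
  cases n with
  | zero => simp [Subsingleton.elim _ π]
  | succ N =>
    rw [card_filter_sort_eq_card_filter_strictMono, card_filter_strictMono]
    congr 1
    have := des_le π
    omega

section GeneratingFunction

variable {R : Type*} [CommRing R]

-- `q + n - d` truncates; `d ≤ n` makes the binomial vanish exactly when `d > q`.
lemma coeff_X_pow_mul_invOneSubPow {d n : ℕ} (hd : d ≤ n) (q : ℕ) :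
    PowerSeries.coeff q (PowerSeries.X ^ d * (PowerSeries.invOneSubPow R (n + 1)).val)
      = ((q + n - d).choose n : R) := by
  rw [PowerSeries.coeff_X_pow_mul', PowerSeries.invOneSubPow_val_succ_eq_mk_add_choose]
  split_ifs with h
  · rw [PowerSeries.coeff_mk, add_comm n, Nat.sub_add_comm h]
  · rw [Nat.choose_eq_zero_of_lt (by omega), Nat.cast_zero]

lemma coeff_sum_des_mul_invOneSubPow {n : ℕ} (w : Perm (Fin n) → ℤ) (q : ℕ) :
    PowerSeries.coeff q (((∑ π, (w π : R[X]) * X ^ des π : R[X]) : PowerSeries R)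
        * (PowerSeries.invOneSubPow R (n + 1)).val)
      = ∑ f : Fin n → Fin (q + 1), (w (Tuple.sort f) : R) := by
  rw [← Polynomial.coeToPowerSeries.ringHom_apply, map_sum, sum_mul, map_sum,
    ← sum_fiberwise univ Tuple.sort]
  refine sum_congr rfl fun π _ => ?_
  rw [map_mul Polynomial.coeToPowerSeries.ringHom, map_intCast, map_pow,
    Polynomial.coeToPowerSeries.ringHom_apply, Polynomial.coe_X, mul_assoc, ← zsmul_eq_mul,
    map_zsmul, coeff_X_pow_mul_invOneSubPow (des_le_card π),
    sum_congr rfl fun f hf => by rw [(mem_filter.1 hf).2], sum_const, card_filter_sort_eq,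
    zsmul_eq_mul, nsmul_eq_mul, mul_comm]

lemma eq_one_sub_X_pow_mul_of_coe_mul_invOneSubPow {p r : R[X]} {d e : ℕ}
    (h : (p : PowerSeries R) * (PowerSeries.invOneSubPow R (d + e)).val
      = r * (PowerSeries.invOneSubPow R e).val) :
    p = (1 - X) ^ d * r := by
  have hp : (1 - PowerSeries.X) ^ (d + e) * (PowerSeries.invOneSubPow R (d + e)).val = 1 := by
    simpa using PowerSeries.one_sub_pow_add_mul_invOneSubPow_val_eq_one_sub_pow R (d := 0) (d + e)
  have hr := PowerSeries.one_sub_pow_add_mul_invOneSubPow_val_eq_one_sub_pow R (d := d) e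
  rw [← Polynomial.coe_inj, Polynomial.coe_mul, Polynomial.coe_pow, Polynomial.coe_sub,
    Polynomial.coe_one, Polynomial.coe_X]
  linear_combination
    (-(p : PowerSeries R)) * hp + (1 - PowerSeries.X) ^ (d + e) * h + (r : PowerSeries R) * hr

lemma coeff_sum_sign_mul_X_pow_des_mul_invOneSubPow (n q : ℕ) :
    PowerSeries.coeff q
        (((∑ π : Perm (Fin n), ((Perm.sign π : ℤ) : R[X]) * X ^ des π : R[X]) : PowerSeries R)
          * (PowerSeries.invOneSubPow R (n + 1)).val)
      = ((q : R) + 1) ^ ((n + 1) / 2) := by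
  rw [coeff_sum_des_mul_invOneSubPow]
  simp only [Tuple.sign_sort]
  rw [← Int.cast_sum, Tuple.sum_neg_one_pow_inversions, Fintype.card_fin]
  norm_cast

lemma coeff_eulerian_mul_invOneSubPow (k q : ℕ) :
    PowerSeries.coeff q ((Eulerian k : PowerSeries ℚ) * (PowerSeries.invOneSubPow ℚ (k + 1)).val)
      = ((q : ℚ) + 1) ^ k := by
  have h := coeff_sum_des_mul_invOneSubPow (R := ℚ) (fun _ : Perm (Fin k) => 1) q
  simp only [Int.cast_one, one_mul] at h
  rw [Eulerian, h, sum_const, card_univ, Fintype.card_fun, Fintype.card_fin, Fintype.card_fin]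
  simp

end GeneratingFunction

theorem sum_sign_mul_X_pow_des (n : ℕ) :
    ∑ π : Perm (Fin n), ((Perm.sign π : ℤ) : ℚ[X]) * X ^ des π
      = (1 - X) ^ (n / 2) * Eulerian ((n + 1) / 2) := by
  apply eq_one_sub_X_pow_mul_of_coe_mul_invOneSubPow
  rw [← show n + 1 = n / 2 + ((n + 1) / 2 + 1) by omega]
  ext q
  rw [coeff_sum_sign_mul_X_pow_des_mul_invOneSubPow, coeff_eulerian_mul_invOneSubPow]

theorem stmt19_general (n : ℕ) (m : ℕ) :
    (n = 2 * m →
      ∑ π : Equiv.Perm (Fin n), ((Equiv.Perm.sign π : ℤ) : ℚ[X]) * X ^ des π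
        = (1 - X) ^ m * Eulerian m) ∧
    (n = 2 * m + 1 →
      ∑ π : Equiv.Perm (Fin n), ((Equiv.Perm.sign π : ℤ) : ℚ[X]) * X ^ des π
        = (1 - X) ^ m * Eulerian (m + 1)) := by
  constructor
  · rintro rfl
    rw [sum_sign_mul_X_pow_des, show 2 * m / 2 = m by omega, show (2 * m + 1) / 2 = m by omega]
  · rintro rfl
    rw [sum_sign_mul_X_pow_des, show (2 * m + 1) / 2 = m by omega,
      show (2 * m + 1 + 1) / 2 = m + 1 by omega]

theorem stmt19 (n : ℕ) (hn : 0 < n) (m : ℕ) :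
    (n = 2 * m →
      ∑ π : Equiv.Perm (Fin n), ((Equiv.Perm.sign π : ℤ) : ℚ[X]) * X ^ des π
        = (1 - X) ^ m * Eulerian m) ∧
    (n = 2 * m + 1 →
      ∑ π : Equiv.Perm (Fin n), ((Equiv.Perm.sign π : ℤ) : ℚ[X]) * X ^ des π
        = (1 - X) ^ m * Eulerian (m + 1)) :=
  stmt19_general n m
end
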